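/- For every normal fuzzy logic program P, the ≤ₚ-least fixpoint of the stable approximator A_P* is less than or equal to, in the precision order ≤ₚ, the ≤ₚ-least fixpoint of the stable approximator (T_P^u)* of the ultimate approximator T_P^u of T_P. -/
import Mathlib


open scoped Classical

/-- Normal fuzzy formulas over truth values `V` and atoms `A`: constants, atoms,
negated atoms, and applications of `n`-ary connectives given by their truth functions. -/
inductive FForm (V : Type*) (A : Type*) : Type _ where
  | const : V → FForm V A
  | atom : A → FForm V A
  | natom : A → FForm V A
  | app : (n : ℕ) → ((Fin n → V) → V) → (Fin n → FForm V A) → FForm V A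

namespace FForm

variable {V : Type*} {A : Type*} [CompleteLattice V]

/-- All connective truth functions occurring in the formula are monotone. -/
def Good : FForm V A → Prop
  | const _ => True
  | atom _ => True
  | natom _ => True
  | app _ f args => Monotone f ∧ ∀ i, Good (args i)

/-- Evaluation `⟦φ⟧_{(L,U)}` of a formula under a pair of interpretations:
atoms are evaluated by `L`, negated atoms by `∼ U(·)`. -/
def evalPair (ng : V → V) (L U : A → V) : FForm V A → V
  | const c => c
  | atom p => L p
  | natom p => ng (U p)
  | app _ f args => f (fun i => evalPair ng L U (args i))

/-- Evaluation `⟦φ⟧_I` under a single interpretation. -/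
def evalI (ng : V → V) (I : A → V) (φ : FForm V A) : V := evalPair ng I I φ

end FForm

/-- A rule `p ←ᵢ^θ B` of a normal fuzzy logic program, carrying its
conjunctor truth function. -/
structure Rule (V : Type*) (A : Type*) where
  head : A
  weight : V
  conj : V → V → V
  body : FForm V A

variable {V : Type*} {A : Type*} [CompleteLattice V]

/-- All rule bodies are built from monotone connectives and all conjunctors are
monotone in both arguments. -/
def GoodProgram (P : Set (Rule V A)) : Prop :=
  ∀ r ∈ P, FForm.Good r.body ∧ (∀ x : V, Monotone (r.conj x)) ∧
    (∀ y : V, Monotone (fun x => r.conj x y))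

/-- The immediate consequence operator `T_P`. -/
noncomputable def Tp (ng : V → V) (P : Set (Rule V A)) (I : A → V) : A → V :=
  fun p => sSup {v | ∃ r ∈ P, r.head = p ∧ v = r.conj r.weight (FForm.evalI ng I r.body)}

/-- The approximator `A_P` on pairs of interpretations. -/
noncomputable def Ap (ng : V → V) (P : Set (Rule V A)) :
    (A → V) × (A → V) → (A → V) × (A → V) :=
  fun LU =>
    (fun p => sSup {v | ∃ r ∈ P, r.head = p ∧
        v = r.conj r.weight (FForm.evalPair ng LU.1 LU.2 r.body)},
     fun p => sSup {v | ∃ r ∈ P, r.head = p ∧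
        v = r.conj r.weight (FForm.evalPair ng LU.2 LU.1 r.body)})

/-- The precision order `≤ₚ` on pairs of interpretations. -/
def prec (x y : (A → V) × (A → V)) : Prop := x.1 ≤ y.1 ∧ y.2 ≤ x.2

/-- The least fixpoint of a (monotone) operator on a complete lattice,
via Knaster–Tarski. -/
noncomputable def lfp {α : Type*} [CompleteLattice α] (F : α → α) : α :=
  sInf {x | F x ≤ x}

/-- The stable approximator `B*` associated to an operator `B` on pairs. -/
noncomputable def stableAp (F : (A → V) × (A → V) → (A → V) × (A → V)) :
    (A → V) × (A → V) → (A → V) × (A → V) :=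
  fun LU => (lfp (fun L' => (F (L', LU.2)).1), lfp (fun U' => (F (LU.1, U')).2))


/-- The `≤ₚ`-least fixpoint of an operator on pairs of interpretations, via
Knaster–Tarski in the precision lattice: the `≤ₚ`-infimum of the set of
`≤ₚ`-prefixpoints. -/
noncomputable def lfpPrec {V : Type*} {A : Type*} [CompleteLattice V]
    (F : (A → V) × (A → V) → (A → V) × (A → V)) : (A → V) × (A → V) :=
  (sInf {L | ∃ W, prec (F W) W ∧ L = W.1}, sSup {U | ∃ W, prec (F W) W ∧ U = W.2})

/-- The ultimate approximator of `T_P`: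
`T_P^u(L,U) = (⨅{ T_P(K) : L ≤ K ≤ U }, ⨆{ T_P(K) : L ≤ K ≤ U })`. -/
noncomputable def Ult {V : Type*} {A : Type*} [CompleteLattice V]
    (ng : V → V) (P : Set (Rule V A)) :
    (A → V) × (A → V) → (A → V) × (A → V) :=
  fun LU =>
    (sInf {J | ∃ K, LU.1 ≤ K ∧ K ≤ LU.2 ∧ J = Tp ng P K},
     sSup {J | ∃ K, LU.1 ≤ K ∧ K ≤ LU.2 ∧ J = Tp ng P K})

lemma evalPair_mono {V : Type*} {A : Type*} [CompleteLattice V]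
    (ng : V → V) (hng : Antitone ng) {φ : FForm V A} (hφ : FForm.Good φ)
    {L1 L2 U1 U2 : A → V} (hL : L1 ≤ L2) (hU : U2 ≤ U1) :
    FForm.evalPair ng L1 U1 φ ≤ FForm.evalPair ng L2 U2 φ := by
  induction φ with
  | const c => exact le_rfl
  | atom p => exact hL p
  | natom p => exact hng (hU p)
  | app n f args ih =>
    exact hφ.1 (fun i => ih i (hφ.2 i))

lemma my_lfp_mono {α : Type*} [CompleteLattice α] {F G : α → α}
    (h : ∀ x, F x ≤ G x) : lfp F ≤ lfp G :=
  sInf_le_sInf (fun x hx => le_trans (h x) hx)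

lemma Ap_fst_le_Ult_fst {V : Type*} {A : Type*} [CompleteLattice V]
    (ng : V → V) (hng : Antitone ng) (P : Set (Rule V A)) (hP : GoodProgram P)
    (W : (A → V) × (A → V)) : (Ap ng P W).1 ≤ (Ult ng P W).1 := by
  refine le_sInf (fun J hJ => ?_)
  obtain ⟨K, hLK, hKU, rfl⟩ := hJ
  intro p
  refine sSup_le (fun v hv => ?_)
  obtain ⟨r, hr, hhead, rfl⟩ := hv
  refine le_sSup_of_le ⟨r, hr, hhead, rfl⟩ ?_
  exact ((hP r hr).2.1 r.weight)
    (evalPair_mono ng hng (hP r hr).1 hLK hKU)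

lemma Ult_snd_le_Ap_snd {V : Type*} {A : Type*} [CompleteLattice V]
    (ng : V → V) (hng : Antitone ng) (P : Set (Rule V A)) (hP : GoodProgram P)
    (W : (A → V) × (A → V)) : (Ult ng P W).2 ≤ (Ap ng P W).2 := by
  refine sSup_le (fun J hJ => ?_)
  obtain ⟨K, hLK, hKU, rfl⟩ := hJ
  intro p
  refine sSup_le (fun v hv => ?_)
  obtain ⟨r, hr, hhead, rfl⟩ := hv
  refine le_sSup_of_le ⟨r, hr, hhead, rfl⟩ ?_
  exact ((hP r hr).2.1 r.weight)
    (evalPair_mono ng hng (hP r hr).1 hKU hLK)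

lemma stable_prec {V : Type*} {A : Type*} [CompleteLattice V]
    (ng : V → V) (hng : Antitone ng) (P : Set (Rule V A)) (hP : GoodProgram P)
    (W : (A → V) × (A → V)) :
    prec (stableAp (Ap ng P) W) (stableAp (Ult ng P) W) := by
  constructor
  · exact my_lfp_mono (fun L' => Ap_fst_le_Ult_fst ng hng P hP (L', W.2))
  · exact my_lfp_mono (fun U' => Ult_snd_le_Ap_snd ng hng P hP (W.1, U'))

/-- the `≤ₚ`-least fixpoint of the stable approximator `A_P*` is
`≤ₚ` the `≤ₚ`-least fixpoint of the stable approximator `(T_P^u)*` of the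
ultimate approximator of `T_P`. -/
theorem wellFounded_le_ultimate_wellFounded
    {V : Type*} {A : Type*} [CompleteLattice V]
    (ng : V → V) (hng_anti : Antitone ng) (hng_inv : Function.Involutive ng)
    (P : Set (Rule V A)) (hPfin : P.Finite) (hP : GoodProgram P) :
    prec (lfpPrec (stableAp (Ap ng P))) (lfpPrec (stableAp (Ult ng P))) := by
  have hsub : {W : (A → V) × (A → V) | prec (stableAp (Ult ng P) W) W} ⊆
      {W | prec (stableAp (Ap ng P) W) W} := by
    intro W hW
    have h := stable_prec ng hng_anti P hP W
    exact ⟨le_trans h.1 hW.1, le_trans hW.2 h.2⟩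
  constructor
  · refine sInf_le_sInf (fun L hL => ?_)
    obtain ⟨W, hW, rfl⟩ := hL
    exact ⟨W, hsub hW, rfl⟩
  · refine sSup_le_sSup (fun U hU => ?_)
    obtain ⟨W, hW, rfl⟩ := hU
    exact ⟨W, hsub hW, rfl⟩
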